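/- Let F : [0, ∞) → (0, ∞)^I be a solution of the discrete exact-resonance acoustic kinetic system with strictly positive values, and let ρ = I / (∑_{k=1}^{I} k·F_k(0)). Then the solution converges exponentially fast to the equilibrium F*_k = 1/(ρk): there exist constants C₁, C₂ > 0 such that max_{k∈{1,…,I}} |F_k(t) − 1/(ρk)| ≤ C₁·e^{−C₂ t} for all t ≥ 0. -/

import Mathlib

open scoped BigOperators Classical

/-- Right-hand side of the discrete exact-resonance acoustic kinetic system on one ray:
for `k₁ ∈ {1,…,I}` and kernel `V_{k₁,k₂,k₃} = μ k₁ k₂ k₃`,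
`Q_{k₁}[F] = ∑_{k₂+k₃=k₁} V (F_{k₂}F_{k₃} − F_{k₁}(F_{k₂}+F_{k₃}))
  − 2 ∑_{k₁+k₂=k₃} V (F_{k₁}F_{k₂} − F_{k₃}(F_{k₁}+F_{k₂}))`. -/
noncomputable def Qd (I : ℕ) (μ : ℝ) (F : ℕ → ℝ) (k1 : ℕ) : ℝ :=
  (∑ k2 ∈ Finset.Icc 1 I, ∑ k3 ∈ Finset.Icc 1 I,
      if k2 + k3 = k1 then μ * k1 * k2 * k3 * (F k2 * F k3 - F k1 * (F k2 + F k3)) else 0)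
  - 2 * ∑ k2 ∈ Finset.Icc 1 I, ∑ k3 ∈ Finset.Icc 1 I,
      if k1 + k2 = k3 then μ * k3 * k1 * k2 * (F k1 * F k2 - F k3 * (F k1 + F k2)) else 0

/-!
Testing the collision operator against `ψ` gives
`∑ₖ ψₖ Qₖ = ∑_{b+c≤I} μ (b+c) b c (F_b F_c - F_{b+c} (F_b + F_c)) (ψ_{b+c} - ψ_b - ψ_c)`.
For `ψₖ = k` this vanishes, so `∑ k Fₖ = I c` is conserved; for `ψₖ = 1/Fₖ` it is the
dissipation `D = ∑ μ (b+c) b c F_b F_c F_{b+c} (1/F_{b+c} - 1/F_b - 1/F_c)² ≥ 0`, which vanishes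
only when `1/Fₖ` is linear in `k`, i.e. at the equilibrium `k Fₖ = c`. Along solutions the
relative entropy `H = ∑ₖ θ(k Fₖ / c)`, `θ x = x - 1 - log x`, satisfies `H' = -D`, so it is bounded
by `H(0)`, which keeps every `k Fₖ` above a fixed `ε > 0`. On such states `D ≥ λ H`:
`H ≲ ∑ₖ (k Fₖ - c)²`, which is bounded, by telescoping `1/Fₖ - k/F₁` and Cauchy–Schwarz, by the
`b = 1` part of `D`. Grönwall gives `H ≤ H(0) e^{-λt}`, and `(x - 1)² ≤ 2 (x + 1) θ x` turns this
into the pointwise bound.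
-/

open Finset Real

theorem sum_mul_Qd (I : ℕ) (μ : ℝ) (F ψ : ℕ → ℝ) :
    ∑ k ∈ Icc 1 I, ψ k * Qd I μ F k
      = ∑ b ∈ Icc 1 I, ∑ c ∈ Icc 1 I, if b + c ≤ I then
          μ * (b + c : ℕ) * b * c * (F b * F c - F (b + c) * (F b + F c))
            * (ψ (b + c) - ψ b - ψ c) else 0 := by
  set T : ℕ → ℕ → ℝ := fun b c => if b + c ≤ I then
    μ * (b + c : ℕ) * b * c * (F b * F c - F (b + c) * (F b + F c)) else 0 with hT
  have hmem : ∀ b ∈ Icc 1 I, ∀ c ∈ Icc 1 I, b + c ∈ Icc 1 I ↔ b + c ≤ I := by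
    intro b hb c hc; simp only [mem_Icc] at *; omega
  have gain : ∑ k ∈ Icc 1 I, ψ k * ∑ b ∈ Icc 1 I, ∑ c ∈ Icc 1 I,
      (if b + c = k then μ * k * b * c * (F b * F c - F k * (F b + F c)) else 0)
      = ∑ b ∈ Icc 1 I, ∑ c ∈ Icc 1 I, ψ (b + c) * T b c := by
    simp_rw [mul_sum, mul_ite, mul_zero]
    rw [sum_comm]; refine sum_congr rfl fun b hb => ?_
    rw [sum_comm]; refine sum_congr rfl fun c hc => ?_
    rw [sum_ite_eq, hT]
    simp only [hmem b hb c hc]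
    split_ifs <;> simp
  have loss : ∑ k ∈ Icc 1 I, ψ k * ∑ b ∈ Icc 1 I, ∑ c ∈ Icc 1 I,
      (if k + b = c then μ * c * k * b * (F k * F b - F c * (F k + F b)) else 0)
      = ∑ b ∈ Icc 1 I, ∑ c ∈ Icc 1 I, ψ b * T b c := by
    simp_rw [mul_sum, mul_ite, mul_zero]
    refine sum_congr rfl fun b hb => sum_congr rfl fun c hc => ?_
    rw [sum_ite_eq, hT]
    simp only [hmem b hb c hc]
    split_ifs <;> simp
  have swap : ∑ b ∈ Icc 1 I, ∑ c ∈ Icc 1 I, ψ b * T b c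
      = ∑ b ∈ Icc 1 I, ∑ c ∈ Icc 1 I, ψ c * T b c := by
    rw [sum_comm]
    refine sum_congr rfl fun b _ => sum_congr rfl fun c _ => ?_
    simp only [hT, Nat.add_comm c b]
    split_ifs <;> ring
  calc ∑ k ∈ Icc 1 I, ψ k * Qd I μ F k
      = ∑ b ∈ Icc 1 I, ∑ c ∈ Icc 1 I, ψ (b + c) * T b c
          - (∑ b ∈ Icc 1 I, ∑ c ∈ Icc 1 I, ψ b * T b c
            + ∑ b ∈ Icc 1 I, ∑ c ∈ Icc 1 I, ψ c * T b c) := by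
        rw [← swap, ← two_mul, ← gain, ← loss, mul_sum, ← sum_sub_distrib]
        refine sum_congr rfl fun k _ => ?_
        rw [Qd]
        ring
    _ = _ := by
        simp only [← sum_add_distrib, ← sum_sub_distrib]
        refine sum_congr rfl fun b _ => sum_congr rfl fun c _ => ?_
        simp only [hT]
        split_ifs <;> ring

theorem sum_natCast_mul_Qd (I : ℕ) (μ : ℝ) (F : ℕ → ℝ) :
    ∑ k ∈ Icc 1 I, (k : ℝ) * Qd I μ F k = 0 := by
  rw [sum_mul_Qd]
  refine sum_eq_zero fun b _ => sum_eq_zero fun c _ => ?_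
  split_ifs
  · push_cast; ring
  · rfl

noncomputable def collisionDissipation (μ : ℝ) (F : ℕ → ℝ) (b c : ℕ) : ℝ :=
  μ * (b + c : ℕ) * b * c * (F b * F c * F (b + c)) * ((F (b + c))⁻¹ - (F b)⁻¹ - (F c)⁻¹) ^ 2

theorem collisionDissipation_nonneg {μ : ℝ} {F : ℕ → ℝ} {b c : ℕ} (hμ : 0 ≤ μ) (hb : 0 < F b)
    (hc : 0 < F c) (hbc : 0 < F (b + c)) : 0 ≤ collisionDissipation μ F b c := by
  unfold collisionDissipation
  positivity

theorem sum_inv_mul_Qd {I : ℕ} (μ : ℝ) {F : ℕ → ℝ} (hF : ∀ k ∈ Icc 1 I, 0 < F k) :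
    ∑ k ∈ Icc 1 I, (F k)⁻¹ * Qd I μ F k
      = ∑ b ∈ Icc 1 I, ∑ c ∈ Icc 1 I,
          if b + c ≤ I then collisionDissipation μ F b c else 0 := by
  rw [sum_mul_Qd]
  refine sum_congr rfl fun b hb => sum_congr rfl fun c hc => ?_
  split_ifs with h
  · simp only [mem_Icc] at hb hc
    have := hF b (mem_Icc.2 hb)
    have := hF c (mem_Icc.2 hc)
    have := hF (b + c) (mem_Icc.2 ⟨by omega, h⟩)
    rw [collisionDissipation]
    field_simp
    ring
  · rfl

theorem sum_collisionDissipation_one_le_sum_inv_mul_Qd {I : ℕ} {μ : ℝ} {F : ℕ → ℝ} (hμ : 0 ≤ μ)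
    (hF : ∀ k ∈ Icc 1 I, 0 < F k) :
    ∑ c ∈ Icc 1 (I - 1), collisionDissipation μ F 1 c ≤ ∑ k ∈ Icc 1 I, (F k)⁻¹ * Qd I μ F k := by
  rw [sum_inv_mul_Qd μ hF]
  have term_nonneg : ∀ b ∈ Icc 1 I, ∀ c ∈ Icc 1 I,
      (0 : ℝ) ≤ if b + c ≤ I then collisionDissipation μ F b c else 0 := by
    intro b hb c hc
    split_ifs with h
    · exact collisionDissipation_nonneg hμ (hF b hb) (hF c hc)
        (hF (b + c) (mem_Icc.2 ⟨by simp only [mem_Icc] at hb; omega, h⟩))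
    · rfl
  rcases I.eq_zero_or_pos with rfl | hI
  · simp
  have h1 : 1 ∈ Icc 1 I := mem_Icc.2 ⟨le_rfl, hI⟩
  calc ∑ c ∈ Icc 1 (I - 1), collisionDissipation μ F 1 c
      = ∑ c ∈ Icc 1 (I - 1), if 1 + c ≤ I then collisionDissipation μ F 1 c else 0 := by
        refine sum_congr rfl fun c hc => (if_pos ?_).symm
        simp only [mem_Icc] at hc; omega
    _ ≤ ∑ c ∈ Icc 1 I, if 1 + c ≤ I then collisionDissipation μ F 1 c else 0 :=
        sum_le_sum_of_subset_of_nonneg (Icc_subset_Icc le_rfl (Nat.sub_le I 1))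
          fun c hc _ => term_nonneg 1 h1 c hc
    _ ≤ _ := single_le_sum (f := fun b => ∑ c ∈ Icc 1 I, _)
          (fun b hb => sum_nonneg fun c hc => term_nonneg b hb c hc) h1

/-- Zero exactly when `v k = k * v 1` on `{1, …, I}`. -/
def additivityDefect (I : ℕ) (v : ℕ → ℝ) : ℝ :=
  ∑ c ∈ Icc 1 (I - 1), (v (1 + c) - v 1 - v c) ^ 2

theorem mul_additivityDefect_le_sum_inv_mul_Qd {I : ℕ} {μ a : ℝ} {F : ℕ → ℝ} (hμ : 0 ≤ μ)
    (ha : 0 ≤ a) (hF : ∀ k ∈ Icc 1 I, 0 < F k) (haF : ∀ k ∈ Icc 1 I, a ≤ F k) :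
    2 * μ * a ^ 3 * additivityDefect I (fun k => (F k)⁻¹)
      ≤ ∑ k ∈ Icc 1 I, (F k)⁻¹ * Qd I μ F k := by
  refine le_trans ?_ (sum_collisionDissipation_one_le_sum_inv_mul_Qd hμ hF)
  rw [additivityDefect, mul_sum]
  refine sum_le_sum fun c hc => ?_
  have hc1 : (1 : ℝ) ≤ c := by exact_mod_cast (mem_Icc.1 hc).1
  have hF1 := haF 1 (by simp only [mem_Icc] at hc ⊢; omega)
  have hFc := haF c (by simp only [mem_Icc] at hc ⊢; omega)
  have hF1c := haF (1 + c) (by simp only [mem_Icc] at hc ⊢; omega)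
  rw [collisionDissipation]
  push_cast
  calc 2 * μ * a ^ 3 * ((F (1 + c))⁻¹ - (F 1)⁻¹ - (F c)⁻¹) ^ 2
      = μ * (1 + 1) * 1 * 1 * (a * a * a) * ((F (1 + c))⁻¹ - (F 1)⁻¹ - (F c)⁻¹) ^ 2 := by
        ring
    _ ≤ _ := by
        gcongr
        exacts [mul_nonneg (ha.trans hF1) (ha.trans hFc), ha.trans hF1]

theorem sub_natCast_mul_eq_sum_Icc (v : ℕ → ℝ) (n : ℕ) :
    v (n + 1) - (n + 1) * v 1 = ∑ c ∈ Icc 1 n, (v (1 + c) - v 1 - v c) := by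
  induction n with
  | zero => simp
  | succ n ih =>
    rw [sum_Icc_succ_top (by omega), ← ih, add_comm 1 (n + 1)]
    push_cast
    ring

theorem sq_sub_natCast_mul_le_additivityDefect (v : ℕ → ℝ) {I k : ℕ} (hk : k ∈ Icc 1 I) :
    (v k - k * v 1) ^ 2 ≤ I * additivityDefect I v := by
  obtain ⟨hk1, hkI⟩ := mem_Icc.1 hk
  obtain ⟨n, rfl⟩ : ∃ n, k = n + 1 := ⟨k - 1, by omega⟩
  push_cast
  rw [sub_natCast_mul_eq_sum_Icc, additivityDefect]
  calc (∑ c ∈ Icc 1 n, (v (1 + c) - v 1 - v c)) ^ 2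
      ≤ #(Icc 1 n) * ∑ c ∈ Icc 1 n, (v (1 + c) - v 1 - v c) ^ 2 := sq_sum_le_card_mul_sum_sq
    _ ≤ I * ∑ c ∈ Icc 1 (I - 1), (v (1 + c) - v 1 - v c) ^ 2 := by
        gcongr
        · simp only [Nat.card_Icc]; omega
        · omega

theorem sum_sq_sub_mean_le {ι : Type*} (s : Finset ι) (x : ι → ℝ) (a : ℝ) :
    ∑ i ∈ s, (x i - (∑ j ∈ s, x j) / #s) ^ 2 ≤ ∑ i ∈ s, (x i - a) ^ 2 := by
  rcases s.eq_empty_or_nonempty with rfl | hs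
  · simp
  set m := (∑ j ∈ s, x j) / #s
  have hsum : ∑ j ∈ s, x j = #s * m := by
    rw [mul_div_cancel₀ _ (by positivity)]
  have key : ∑ i ∈ s, (x i - a) ^ 2 = ∑ i ∈ s, (x i - m) ^ 2 + #s * (m - a) ^ 2 := by
    simp only [sub_sq, sum_add_distrib, sum_sub_distrib, sum_const, nsmul_eq_mul]
    rw [← sum_mul, ← sum_mul, ← mul_sum, hsum]
    ring
  rw [key]
  exact le_add_of_nonneg_right (mul_nonneg (Nat.cast_nonneg _) (sq_nonneg _))

theorem sum_sq_sub_mean_le_additivityDefect {I : ℕ} {M : ℝ} {F : ℕ → ℝ}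
    (hF : ∀ k ∈ Icc 1 I, 0 < F k) (hM : ∀ k ∈ Icc 1 I, k * F k ≤ M) :
    ∑ k ∈ Icc 1 I, ((k : ℝ) * F k - (∑ l ∈ Icc 1 I, (l : ℝ) * F l) / I) ^ 2
      ≤ I ^ 2 * M ^ 4 * additivityDefect I (fun k => (F k)⁻¹) := by
  have term_le : ∀ k ∈ Icc 1 I, ((k : ℝ) * F k - F 1) ^ 2
      ≤ M ^ 4 * (I * additivityDefect I (fun k => (F k)⁻¹)) := by
    intro k hk
    have h1 : 1 ∈ Icc 1 I := mem_Icc.2 ⟨le_rfl, (mem_Icc.1 hk).1.trans (mem_Icc.1 hk).2⟩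
    have hk1 : (1 : ℝ) ≤ k := by exact_mod_cast (mem_Icc.1 hk).1
    have hF1 := hF 1 h1
    have hFk := hF k hk
    have hF1M : F 1 ≤ M := by simpa using hM 1 h1
    have hFkM : F k ≤ M := le_trans (le_mul_of_one_le_left hFk.le hk1) (hM k hk)
    have hprod : (F 1 * F k) ^ 2 ≤ M ^ 4 := by
      rw [show M ^ 4 = (M * M) ^ 2 by ring]
      gcongr
      exact hF1.le.trans hF1M
    calc ((k : ℝ) * F k - F 1) ^ 2 = (F 1 * F k) ^ 2 * ((F k)⁻¹ - k * (F 1)⁻¹) ^ 2 := by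
          field_simp
          ring
      _ ≤ M ^ 4 * (I * additivityDefect I (fun k => (F k)⁻¹)) :=
          mul_le_mul hprod (sq_sub_natCast_mul_le_additivityDefect (fun k => (F k)⁻¹) hk)
            (sq_nonneg _) (by positivity)
  calc ∑ k ∈ Icc 1 I, ((k : ℝ) * F k - (∑ l ∈ Icc 1 I, (l : ℝ) * F l) / I) ^ 2
      ≤ ∑ k ∈ Icc 1 I, ((k : ℝ) * F k - F 1) ^ 2 := by
        simpa using sum_sq_sub_mean_le (Icc 1 I) (fun k => (k : ℝ) * F k) (F 1)
    _ ≤ ∑ _k ∈ Icc 1 I, M ^ 4 * (I * additivityDefect I (fun k => (F k)⁻¹)) := sum_le_sum term_le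
    _ = I ^ 2 * M ^ 4 * additivityDefect I (fun k => (F k)⁻¹) := by
        simp only [sum_const, Nat.card_Icc, add_tsub_cancel_right, nsmul_eq_mul]
        ring

noncomputable def itakuraSaito (x : ℝ) : ℝ := x - 1 - log x

theorem itakuraSaito_nonneg {x : ℝ} (hx : 0 < x) : 0 ≤ itakuraSaito x := by
  have := log_le_sub_one_of_pos hx
  rw [itakuraSaito]
  linarith

theorem mul_itakuraSaito_le {x : ℝ} (hx : 0 < x) : x * itakuraSaito x ≤ (x - 1) ^ 2 := by
  have h := log_le_sub_one_of_pos (inv_pos.2 hx)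
  rw [log_inv] at h
  have h' := mul_le_mul_of_nonneg_left h hx.le
  rw [mul_sub, mul_inv_cancel₀ hx.ne'] at h'
  rw [itakuraSaito]
  nlinarith

theorem sq_sub_one_le_mul_itakuraSaito {x : ℝ} (hx : 0 < x) :
    (x - 1) ^ 2 ≤ 2 * (x + 1) * itakuraSaito x := by
  set s := √x
  have hs : 0 < s := sqrt_pos.2 hx
  have hsx : s ^ 2 = x := sq_sqrt hx.le
  -- `log x = 2 log √x ≤ 2 (√x - 1)`
  have hlog : (s - 1) ^ 2 ≤ itakuraSaito x := by
    have := log_le_sub_one_of_pos hs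
    rw [itakuraSaito, ← hsx, log_pow]
    push_cast
    nlinarith
  calc (x - 1) ^ 2 = (s + 1) ^ 2 * (s - 1) ^ 2 := by rw [← hsx]; ring
    _ ≤ 2 * (x + 1) * itakuraSaito x := by
        gcongr
        nlinarith [sq_nonneg (s - 1)]

theorem exp_neg_le_of_itakuraSaito_le {x G : ℝ} (hx : 0 < x) (h : itakuraSaito x ≤ G) :
    exp (-(G + 1)) ≤ x := by
  rw [← exp_log hx, exp_le_exp]
  rw [itakuraSaito] at h
  linarith

theorem hasDerivAt_itakuraSaito {x : ℝ} (hx : x ≠ 0) :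
    HasDerivAt itakuraSaito (1 - x⁻¹) x :=
  ((hasDerivAt_id' x).sub_const 1).fun_sub (hasDerivAt_log hx)

theorem itakuraSaito_div_le {c u ε : ℝ} (hc : 0 < c) (hε : 0 < ε) (hεu : ε ≤ u) :
    itakuraSaito (u / c) ≤ (u - c) ^ 2 / (c * ε) := by
  have hu : 0 < u := hε.trans_le hεu
  have hx : 0 < u / c := div_pos hu hc
  rw [le_div_iff₀ (by positivity)]
  calc itakuraSaito (u / c) * (c * ε) ≤ itakuraSaito (u / c) * (c * u) := by
        gcongr
        exact itakuraSaito_nonneg hx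
    _ = c ^ 2 * (u / c * itakuraSaito (u / c)) := by field_simp
    _ ≤ c ^ 2 * (u / c - 1) ^ 2 := by gcongr; exact mul_itakuraSaito_le hx
    _ = (u - c) ^ 2 := by field_simp

noncomputable def relEntropy (I : ℕ) (c : ℝ) (F : ℕ → ℝ) : ℝ :=
  ∑ k ∈ Icc 1 I, itakuraSaito (k * F k / c)

section State

variable {I : ℕ} {c : ℝ} {F : ℕ → ℝ}

theorem itakuraSaito_div_nonneg (hc : 0 < c) (hF : ∀ k ∈ Icc 1 I, 0 < F k) {k : ℕ}
    (hk : k ∈ Icc 1 I) : 0 ≤ itakuraSaito (k * F k / c) :=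
  itakuraSaito_nonneg (div_pos (mul_pos (by exact_mod_cast (mem_Icc.1 hk).1) (hF k hk)) hc)

theorem relEntropy_nonneg (hc : 0 < c) (hF : ∀ k ∈ Icc 1 I, 0 < F k) : 0 ≤ relEntropy I c F :=
  sum_nonneg fun _ hk => itakuraSaito_div_nonneg hc hF hk

theorem itakuraSaito_le_relEntropy (hc : 0 < c) (hF : ∀ k ∈ Icc 1 I, 0 < F k) {k : ℕ}
    (hk : k ∈ Icc 1 I) : itakuraSaito (k * F k / c) ≤ relEntropy I c F :=
  single_le_sum (f := fun k => itakuraSaito (k * F k / c))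
    (fun _ hl => itakuraSaito_div_nonneg hc hF hl) hk

theorem mul_relEntropy_le_sum_inv_mul_Qd {μ ε : ℝ} (hI : 0 < I) (hμ : 0 ≤ μ)
    (hc : 0 < c) (hε : 0 < ε) (hmass : ∑ k ∈ Icc 1 I, (k : ℝ) * F k = I * c)
    (hεF : ∀ k ∈ Icc 1 I, ε ≤ k * F k) :
    2 * μ * (ε / I) ^ 3 * (c * ε) / (I ^ 2 * (I * c) ^ 4) * relEntropy I c F
      ≤ ∑ k ∈ Icc 1 I, (F k)⁻¹ * Qd I μ F k := by
  have hIpos : (0 : ℝ) < I := by exact_mod_cast hI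
  have hkI : ∀ k ∈ Icc 1 I, (0 : ℝ) < k ∧ (k : ℝ) ≤ I := fun k hk =>
    ⟨by exact_mod_cast (mem_Icc.1 hk).1, by exact_mod_cast (mem_Icc.1 hk).2⟩
  have hF : ∀ k ∈ Icc 1 I, 0 < F k := fun k hk =>
    pos_of_mul_pos_right (hε.trans_le (hεF k hk)) (hkI k hk).1.le
  have hFε : ∀ k ∈ Icc 1 I, ε / I ≤ F k := fun k hk => by
    rw [div_le_iff₀ hIpos]
    exact (hεF k hk).trans (by nlinarith [hkI k hk, hF k hk])
  have hM : ∀ k ∈ Icc 1 I, k * F k ≤ I * c := fun k hk =>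
    hmass ▸ single_le_sum (fun l hl => (mul_pos (hkI l hl).1 (hF l hl)).le) hk
  have hvar := sum_sq_sub_mean_le_additivityDefect hF hM
  rw [hmass, mul_div_cancel_left₀ c hIpos.ne'] at hvar
  have hentropy : relEntropy I c F ≤ (∑ k ∈ Icc 1 I, ((k : ℝ) * F k - c) ^ 2) / (c * ε) := by
    rw [relEntropy, sum_div]
    exact sum_le_sum fun k hk => itakuraSaito_div_le hc hε (hεF k hk)
  calc 2 * μ * (ε / I) ^ 3 * (c * ε) / (I ^ 2 * (I * c) ^ 4) * relEntropy I c F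
      ≤ 2 * μ * (ε / I) ^ 3 * (c * ε) / (I ^ 2 * (I * c) ^ 4)
        * ((I ^ 2 * (I * c) ^ 4 * additivityDefect I (fun k => (F k)⁻¹)) / (c * ε)) := by
        gcongr
        exact hentropy.trans (by gcongr)
    _ = 2 * μ * (ε / I) ^ 3 * additivityDefect I (fun k => (F k)⁻¹) := by
        field_simp
    _ ≤ ∑ k ∈ Icc 1 I, (F k)⁻¹ * Qd I μ F k :=
        mul_additivityDefect_le_sum_inv_mul_Qd hμ (by positivity) hF hFε

theorem sq_sub_div_natCast_le_mul_relEntropy {k : ℕ} (hc : 0 < c)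
    (hF : ∀ k ∈ Icc 1 I, 0 < F k) (hmass : ∑ l ∈ Icc 1 I, (l : ℝ) * F l = I * c)
    (hk : k ∈ Icc 1 I) :
    (F k - c / k) ^ 2 ≤ 2 * (I + 1) * c ^ 2 * relEntropy I c F := by
  have hk1 : (1 : ℝ) ≤ k := by exact_mod_cast (mem_Icc.1 hk).1
  have hx : 0 < k * F k / c := div_pos (mul_pos (by linarith) (hF k hk)) hc
  have hxI : k * F k / c ≤ I := by
    rw [div_le_iff₀ hc, ← hmass]
    exact single_le_sum (fun l hl => mul_nonneg (Nat.cast_nonneg l) (hF l hl).le) hk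
  calc (F k - c / k) ^ 2 = c ^ 2 * (k * F k / c - 1) ^ 2 / k ^ 2 := by field_simp
    _ ≤ c ^ 2 * (k * F k / c - 1) ^ 2 := div_le_self (by positivity) (by nlinarith)
    _ ≤ c ^ 2 * (2 * (k * F k / c + 1) * itakuraSaito (k * F k / c)) := by
        gcongr
        exact sq_sub_one_le_mul_itakuraSaito hx
    _ ≤ c ^ 2 * (2 * (I + 1) * relEntropy I c F) := by
        gcongr
        · exact itakuraSaito_div_nonneg hc hF hk
        · exact itakuraSaito_le_relEntropy hc hF hk
    _ = 2 * (I + 1) * c ^ 2 * relEntropy I c F := by ring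

end State

theorem le_mul_exp_neg_of_hasDerivAt {g g' : ℝ → ℝ} {r : ℝ}
    (hg : ∀ t, 0 ≤ t → HasDerivAt g (g' t) t) (hle : ∀ t, 0 ≤ t → g' t ≤ -(r * g t))
    {t : ℝ} (ht : 0 ≤ t) : g t ≤ g 0 * exp (-(r * t)) := by
  have hderiv : ∀ s, 0 ≤ s → HasDerivAt (fun s => g s * exp (r * s))
      (exp (r * s) * (g' s + r * g s)) s := fun s hs =>
    ((hg s hs).mul ((hasDerivAt_id' s).const_mul r).exp).congr_deriv (by ring)
  have hanti : AntitoneOn (fun s => g s * exp (r * s)) (Set.Ici 0) := by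
    refine antitoneOn_of_hasDerivWithinAt_nonpos (convex_Ici 0)
      (fun s hs => (hderiv s hs).continuousAt.continuousWithinAt)
      (fun s hs => (hderiv s (interior_subset hs)).hasDerivWithinAt) fun s hs => ?_
    have := hle s (interior_subset hs)
    exact mul_nonpos_of_nonneg_of_nonpos (exp_pos _).le (by linarith)
  have hmono : g t * exp (r * t) ≤ g 0 := by
    simpa using hanti Set.self_mem_Ici ht ht
  calc g t = g t * exp (r * t) * exp (-(r * t)) := by rw [mul_assoc, ← exp_add]; simp
    _ ≤ g 0 * exp (-(r * t)) := by gcongr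

section Solution

variable {I : ℕ} {μ : ℝ} {F : ℝ → ℕ → ℝ}

theorem sum_natCast_mul_eq_of_hasDerivAt
    (hsol : ∀ k ∈ Icc 1 I, ∀ t : ℝ, 0 ≤ t →
      HasDerivAt (fun s => F s k) (Qd I μ (F t) k) t)
    {t : ℝ} (ht : 0 ≤ t) :
    ∑ k ∈ Icc 1 I, (k : ℝ) * F t k = ∑ k ∈ Icc 1 I, (k : ℝ) * F 0 k := by
  have hderiv : ∀ s, 0 ≤ s → HasDerivAt (fun s => ∑ k ∈ Icc 1 I, (k : ℝ) * F s k) 0 s :=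
    fun s hs => by
      simpa [sum_natCast_mul_Qd] using
        HasDerivAt.fun_sum fun k hk => (hsol k hk s hs).const_mul (k : ℝ)
  exact constant_of_has_deriv_right_zero
    (fun s hs => (hderiv s hs.1).continuousAt.continuousWithinAt)
    (fun s hs => (hderiv s hs.1).hasDerivWithinAt) t ⟨ht, le_rfl⟩

theorem hasDerivAt_relEntropy {c : ℝ}
    (hsol : ∀ k ∈ Icc 1 I, ∀ t : ℝ, 0 ≤ t →
      HasDerivAt (fun s => F s k) (Qd I μ (F t) k) t)
    (hpos : ∀ k ∈ Icc 1 I, ∀ t : ℝ, 0 ≤ t → 0 < F t k) (hc : 0 < c) {t : ℝ} (ht : 0 ≤ t) :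
    HasDerivAt (fun s => relEntropy I c (F s)) (-∑ k ∈ Icc 1 I, (F t k)⁻¹ * Qd I μ (F t) k) t := by
  have hterm : ∀ k ∈ Icc 1 I, HasDerivAt (fun s => itakuraSaito (k * F s k / c))
      (k * Qd I μ (F t) k / c - (F t k)⁻¹ * Qd I μ (F t) k) t := by
    intro k hk
    have hk0 : (0 : ℝ) < k := by exact_mod_cast (mem_Icc.1 hk).1
    have hF := hpos k hk t ht
    refine ((hasDerivAt_itakuraSaito (by positivity)).comp t
      (((hsol k hk t ht).const_mul (k : ℝ)).div_const c)).congr_deriv ?_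
    field_simp
  refine (HasDerivAt.fun_sum hterm).congr_deriv ?_
  rw [sum_sub_distrib, ← sum_div, sum_natCast_mul_Qd, zero_div, zero_sub]

theorem exists_relEntropy_le_mul_exp_neg {c : ℝ} (hI : 0 < I) (hμ : 0 < μ)
    (hsol : ∀ k ∈ Icc 1 I, ∀ t : ℝ, 0 ≤ t →
      HasDerivAt (fun s => F s k) (Qd I μ (F t) k) t)
    (hpos : ∀ k ∈ Icc 1 I, ∀ t : ℝ, 0 ≤ t → 0 < F t k) (hc : 0 < c)
    (hmass : ∀ t, 0 ≤ t → ∑ k ∈ Icc 1 I, (k : ℝ) * F t k = I * c) :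
    ∃ r > 0, ∀ t, 0 ≤ t → relEntropy I c (F t) ≤ relEntropy I c (F 0) * exp (-(r * t)) := by
  have hH := fun t (ht : 0 ≤ t) => hasDerivAt_relEntropy hsol hpos hc ht
  -- Grönwall with `r = 0`; the dissipation is nonnegative (the case `a = 0`)
  have hH_le : ∀ t, 0 ≤ t → relEntropy I c (F t) ≤ relEntropy I c (F 0) := fun t ht => by
    simpa using le_mul_exp_neg_of_hasDerivAt (r := 0) hH (fun s hs => by
      simpa using mul_additivityDefect_le_sum_inv_mul_Qd hμ.le le_rfl (hpos · · s hs)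
        (fun k hk => (hpos k hk s hs).le)) ht
  set ε := c * exp (-(relEntropy I c (F 0) + 1))
  have hεF : ∀ t, 0 ≤ t → ∀ k ∈ Icc 1 I, ε ≤ k * F t k := fun t ht k hk => by
    have hx : 0 < k * F t k / c :=
      div_pos (mul_pos (by exact_mod_cast (mem_Icc.1 hk).1) (hpos k hk t ht)) hc
    have := exp_neg_le_of_itakuraSaito_le hx
      ((itakuraSaito_le_relEntropy hc (hpos · · t ht) hk).trans (hH_le t ht))
    rwa [le_div_iff₀' hc] at this
  refine ⟨_, by positivity, fun t ht => le_mul_exp_neg_of_hasDerivAt hH (fun s hs => neg_le_neg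
    (mul_relEntropy_le_sum_inv_mul_Qd hI hμ.le hc (by positivity) (hmass s hs) (hεF s hs))) ht⟩

end Solution

/-- Exponential convergence to equilibrium for the discrete exact-resonance acoustic
kinetic system: with `ρ = I / ∑_k k F_k(0)`, every positive solution satisfies
`max_k |F_k(t) − 1/(ρk)| ≤ C₁ e^{−C₂ t}`. -/
theorem exponential_convergence_exact_resonance (I : ℕ) (hI : 0 < I) (μ : ℝ) (hμ : 0 < μ)
    (F : ℝ → ℕ → ℝ)
    (hsol : ∀ k ∈ Finset.Icc 1 I, ∀ t : ℝ, 0 ≤ t →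
      HasDerivAt (fun s => F s k) (Qd I μ (F t) k) t)
    (hpos : ∀ k ∈ Finset.Icc 1 I, ∀ t : ℝ, 0 ≤ t → 0 < F t k)
    (ρ : ℝ) (hρ : ρ = (I : ℝ) / ∑ k ∈ Finset.Icc 1 I, (k : ℝ) * F 0 k) :
    ∃ C1 C2 : ℝ, 0 < C1 ∧ 0 < C2 ∧
      ∀ t : ℝ, 0 ≤ t → ∀ k ∈ Finset.Icc 1 I,
        |F t k - 1 / (ρ * k)| ≤ C1 * Real.exp (-C2 * t) := by
  have hIpos : (0 : ℝ) < I := by exact_mod_cast hI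
  set c := (∑ k ∈ Icc 1 I, (k : ℝ) * F 0 k) / I with hc_def
  have hc : 0 < c := div_pos (sum_pos (fun k hk => mul_pos
    (by exact_mod_cast (mem_Icc.1 hk).1) (hpos k hk 0 le_rfl)) ⟨1, mem_Icc.2 ⟨le_rfl, hI⟩⟩) hIpos
  have hmass : ∀ t, 0 ≤ t → ∑ k ∈ Icc 1 I, (k : ℝ) * F t k = I * c := fun t ht => by
    rw [sum_natCast_mul_eq_of_hasDerivAt hsol ht, hc_def, mul_div_cancel₀ _ hIpos.ne']
  obtain ⟨r, hr, hdecay⟩ := exists_relEntropy_le_mul_exp_neg hI hμ hsol hpos hc hmass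
  set H₀ := relEntropy I c (F 0)
  have hH₀ : 0 ≤ H₀ := relEntropy_nonneg hc (hpos · · 0 le_rfl)
  refine ⟨c * √(2 * (I + 1) * (H₀ + 1)), r / 2, by positivity, by positivity,
    fun t ht k hk => ?_⟩
  rw [show 1 / (ρ * k) = c / k by rw [hρ, hc_def]; field_simp]
  refine abs_le_of_sq_le_sq ?_ (by positivity)
  calc (F t k - c / k) ^ 2 ≤ 2 * (I + 1) * c ^ 2 * relEntropy I c (F t) :=
        sq_sub_div_natCast_le_mul_relEntropy hc (hpos · · t ht) (hmass t ht) hk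
    _ ≤ 2 * (I + 1) * c ^ 2 * ((H₀ + 1) * exp (-(r * t))) := by
        gcongr
        exact (hdecay t ht).trans (by gcongr; linarith)
    _ = (c * √(2 * (I + 1) * (H₀ + 1)) * exp (-(r / 2) * t)) ^ 2 := by
        rw [mul_pow, mul_pow, sq_sqrt (by positivity), ← exp_nat_mul]
        ring_nf
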